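/- Fix an integer m ≥ 2 and let B = ⋃_{j≥1} B_j, where B_j = {n ∈ ℕ : d_j ∣ n and exp(j^m) ≤ n < exp((j+1)^m)}. Then B(x/2) ≥ B(x)/2 for all sufficiently large x; in particular, B satisfies the c-condition with c = 1/2. -/

import Mathlib

open Filter Real
open Finset

/-- `cnt B x` is the number of elements of `B` in the interval `[1, x]`. -/
noncomputable def cnt (B : Set ℕ) (x : ℝ) : ℕ :=
  {n : ℕ | n ∈ B ∧ 1 ≤ n ∧ (n : ℝ) ≤ x}.ncard

/-- `dPrimorial j = p_1 p_2 ⋯ p_j`, the product of the first `j` primes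
(`Nat.nth Nat.Prime i` is the `(i+1)`-st prime). -/
noncomputable def dPrimorial (j : ℕ) : ℕ := ∏ i ∈ Finset.range j, Nat.nth Nat.Prime i

/-- `Bset m j = {n ∈ ℕ : d_j ∣ n and exp(j^m) ≤ n < exp((j+1)^m)}`. -/
def Bset (m j : ℕ) : Set ℕ :=
  {n : ℕ | dPrimorial j ∣ n ∧
    Real.exp ((j : ℝ) ^ m) ≤ (n : ℝ) ∧ (n : ℝ) < Real.exp (((j : ℝ) + 1) ^ m)}


lemma nth_prime_le_two_pow (i : ℕ) : Nat.nth Nat.Prime i ≤ 2 ^ (i + 1) := by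
  induction i with
  | zero => simp [Nat.nth_prime_zero_eq_two]
  | succ i ih =>
    obtain ⟨q, hq, hlt, hle⟩ := Nat.exists_prime_lt_and_le_two_mul (Nat.nth Nat.Prime i)
      (Nat.Prime.ne_zero (Nat.prime_nth_prime i))
    have h1 : Nat.nth Nat.Prime (Nat.count Nat.Prime q) = q := Nat.nth_count hq
    have h2 : i < Nat.count Nat.Prime q := by
      rw [← Nat.nth_lt_nth Nat.infinite_setOf_prime, h1]; exact hlt
    have h3 : Nat.nth Nat.Prime (i+1) ≤ q := by
      rw [← h1, Nat.nth_le_nth Nat.infinite_setOf_prime]; omega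
    calc Nat.nth Nat.Prime (i+1) ≤ q := h3
      _ ≤ 2 * Nat.nth Nat.Prime i := hle
      _ ≤ 2 * 2 ^ (i+1) := by omega
      _ = 2 ^ (i+2) := by ring

lemma dPrimorial_pos (j : ℕ) : 0 < dPrimorial j :=
  Finset.prod_pos fun i _ => (Nat.prime_nth_prime i).pos

lemma dPrimorial_le (j : ℕ) : dPrimorial j ≤ 2 ^ (j * j) := by
  induction j with
  | zero => simp [dPrimorial]
  | succ j ih =>
    rw [dPrimorial, Finset.prod_range_succ]
    calc (∏ i ∈ Finset.range j, Nat.nth Nat.Prime i) * Nat.nth Nat.Prime j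
        ≤ 2 ^ (j*j) * 2 ^ (j+1) := Nat.mul_le_mul ih (nth_prime_le_two_pow j)
      _ = 2 ^ (j*j + j + 1) := by ring
      _ ≤ 2 ^ ((j+1)*(j+1)) := Nat.pow_le_pow_right (by norm_num) (by ring_nf; omega)

lemma dPrimorial_dvd {i j : ℕ} (h : i ≤ j) : dPrimorial i ∣ dPrimorial j :=
  Finset.prod_dvd_prod_of_subset _ _ _ (Finset.range_subset_range.2 h)

lemma two_le_nth_prime (i : ℕ) : 2 ≤ Nat.nth Nat.Prime i := (Nat.prime_nth_prime i).two_le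

lemma four_dPrimorial_le {j : ℕ} (h : 2 ≤ j) : 4 * dPrimorial (j-2) ≤ dPrimorial j := by
  obtain ⟨k, rfl⟩ : ∃ k, j = k + 2 := ⟨j - 2, by omega⟩
  have : dPrimorial (k+2) = dPrimorial k * Nat.nth Nat.Prime k * Nat.nth Nat.Prime (k+1) := by
    rw [dPrimorial, Finset.prod_range_succ, Finset.prod_range_succ]; rfl
  rw [this]
  have h1 := two_le_nth_prime k
  have h2 := two_le_nth_prime (k+1)
  have : k + 2 - 2 = k := by omega
  rw [this]
  calc 4 * dPrimorial (k) = dPrimorial k * 2 * 2 := by ring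
    _ ≤ dPrimorial k * Nat.nth Nat.Prime k * Nat.nth Nat.Prime (k+1) :=
      Nat.mul_le_mul (Nat.mul_le_mul_left _ h1) h2

lemma Ioc_filter_dvd_card (d a b : ℕ) (hab : a ≤ b) :
    #{x ∈ Ioc a b | d ∣ x} = b / d - a / d := by
  have hsplit : {x ∈ Ioc 0 b | d ∣ x} = {x ∈ Ioc 0 a | d ∣ x} ∪ {x ∈ Ioc a b | d ∣ x} := by
    rw [← Finset.filter_union, Finset.Ioc_union_Ioc_eq_Ioc (Nat.zero_le a) hab]
  have hdisj : Disjoint {x ∈ Ioc 0 a | d ∣ x} {x ∈ Ioc a b | d ∣ x} := by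
    apply Finset.disjoint_filter_filter
    rw [Finset.disjoint_left]
    intro x hx hx'
    simp only [Finset.mem_Ioc] at hx hx'
    omega
  have h1 := Nat.Ioc_filter_dvd_card_eq_div b d
  have h2 := Nat.Ioc_filter_dvd_card_eq_div a d
  have h3 := Finset.card_union_of_disjoint hdisj
  rw [← hsplit, h1, h2] at h3
  omega

lemma cast_div_lb (a d : ℕ) (hd : 0 < d) : (a : ℝ) / d - 1 < ((a / d : ℕ) : ℝ) := by
  have h1 := Nat.div_add_mod a d
  have h2 := Nat.mod_lt a hd
  have hd' : (0:ℝ) < d := by exact_mod_cast hd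
  rw [sub_lt_iff_lt_add, div_lt_iff₀ hd']
  have : (a : ℝ) < d * (a/d : ℕ) + d := by exact_mod_cast by omega
  nlinarith

lemma mult_card_le (d a b : ℕ) (hd : 0 < d) (hab : a ≤ b) :
    (#{x ∈ Ioc a b | d ∣ x} : ℝ) ≤ ((b : ℝ) - a) / d + 1 := by
  rw [Ioc_filter_dvd_card d a b hab,
    Nat.cast_sub (Nat.div_le_div_right hab)]
  have h1 : ((b / d : ℕ) : ℝ) ≤ (b : ℝ) / d := Nat.cast_div_le
  have h2 := cast_div_lb a d hd
  have hd' : (0:ℝ) < d := by exact_mod_cast hd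
  rw [sub_div]
  linarith

lemma mult_card_ge (d a b : ℕ) (hd : 0 < d) (hab : a ≤ b) :
    ((b : ℝ) - a) / d - 1 ≤ (#{x ∈ Ioc a b | d ∣ x} : ℝ) := by
  rw [Ioc_filter_dvd_card d a b hab,
    Nat.cast_sub (Nat.div_le_div_right hab)]
  have h1 : ((a / d : ℕ) : ℝ) ≤ (a : ℝ) / d := Nat.cast_div_le
  have h2 := cast_div_lb b d hd
  rw [sub_div]
  linarith

-- numeric helpers
lemma quad_bound {x : ℝ} (hx : 10 ≤ x) : 0.7*x^2 + 3 ≤ (x-1)^2 := by nlinarith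

lemma twelve_le_exp_three : (12:ℝ) ≤ exp 3 := by
  have h := Real.exp_one_gt_d9
  have : exp 3 = exp 1 ^ 3 := by
    rw [← Real.exp_nat_mul]; norm_num
  rw [this]
  nlinarith [h, Real.exp_pos 1, sq_nonneg (exp 1)]

lemma two_le_exp_pt7 : (2:ℝ) ≤ exp 0.7 := by
  have h := Real.log_two_lt_d9
  have h2 : Real.log 2 ≤ 0.7 := by linarith
  calc (2:ℝ) = exp (Real.log 2) := (Real.exp_log (by norm_num)).symm
    _ ≤ exp 0.7 := Real.exp_le_exp.2 h2

lemma pow_sub_bound {x : ℝ} (hx : 3 ≤ x) {m : ℕ} (hm : 2 ≤ m) :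
    (x-2)^m + (x-1) ≤ (x-1)^m := by
  obtain ⟨m', rfl⟩ : ∃ m', m = m' + 2 := ⟨m - 2, by omega⟩
  set b := x - 1 with hb
  set c := x - 2 with hc
  have hc1 : 1 ≤ c := by simp [hc]; linarith
  have hcb : c ≤ b := by simp [hb, hc]; linarith
  have hc0 : 0 ≤ c := by linarith
  have hb1 : 1 ≤ b := by linarith
  have h1 : c ^ (m'+1) ≤ b ^ (m'+1) := pow_le_pow_left₀ hc0 hcb _
  have h2 : b ≤ b ^ (m'+1) := by
    calc b = b ^ 1 := (pow_one b).symm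
      _ ≤ b ^ (m'+1) := pow_le_pow_right₀ hb1 (by omega)
  have hbc : b = c + 1 := by rw [hb, hc]; ring
  calc c^(m'+2) + b = c^(m'+1) * c + b := by ring
    _ ≤ b^(m'+1) * c + b^(m'+1) := by
        have : c^(m'+1)*c ≤ b^(m'+1)*c := by
          apply mul_le_mul_of_nonneg_right h1 (by linarith)
        linarith
    _ = b^(m'+1) * (c+1) := by ring
    _ = b^(m'+2) := by rw [← hbc]; ring
lemma mem_BU {m n : ℕ} :
    n ∈ (⋃ j ∈ {j : ℕ | 1 ≤ j}, Bset m j) ↔ ∃ k, 1 ≤ k ∧ n ∈ Bset m k := by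
  simp only [Set.mem_iUnion, Set.mem_setOf_eq, exists_prop]

set_option maxHeartbeats 1000000 in
lemma key (m : ℕ) (hm : 2 ≤ m) : ∃ N0 : ℕ, ∀ N : ℕ, N0 ≤ N →
    {n : ℕ | n ∈ (⋃ j ∈ {j : ℕ | 1 ≤ j}, Bset m j) ∧ 1 ≤ n ∧ n ≤ N}.ncard ≤
      2 * {n : ℕ | n ∈ (⋃ j ∈ {j : ℕ | 1 ≤ j}, Bset m j) ∧ 1 ≤ n ∧ n ≤ N / 2}.ncard := by
  classical
  set B := ⋃ j ∈ {j : ℕ | 1 ≤ j}, Bset m j with hB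
  refine ⟨2 * (⌈Real.exp ((10:ℝ)^m)⌉₊ + 1), fun N hN => ?_⟩
  set K := N / 2 with hKdef
  have hset : ∀ M : ℕ, {n : ℕ | n ∈ B ∧ 1 ≤ n ∧ n ≤ M} = ↑({n ∈ Finset.Ioc 0 M | n ∈ B}) := by
    intro M
    ext n
    simp only [Set.mem_setOf_eq, Finset.coe_filter, Finset.mem_Ioc]
    constructor
    · rintro ⟨h1, h2, h3⟩; exact ⟨⟨by omega, h3⟩, h1⟩
    · rintro ⟨⟨h2, h3⟩, h1⟩; exact ⟨h1, by omega, h3⟩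
  rw [hset, hset, Set.ncard_coe_finset, Set.ncard_coe_finset]
  have hKN : K ≤ N := Nat.div_le_self _ _
  have hsplit : #{n ∈ Ioc 0 N | n ∈ B} = #{n ∈ Ioc 0 K | n ∈ B} + #{n ∈ Ioc K N | n ∈ B} := by
    rw [← Finset.card_union_of_disjoint, ← Finset.filter_union,
      Finset.Ioc_union_Ioc_eq_Ioc (Nat.zero_le K) hKN]
    apply Finset.disjoint_filter_filter
    rw [Finset.disjoint_left]
    intro x hx hx'
    simp only [Finset.mem_Ioc] at hx hx'
    omega
  suffices h : #{n ∈ Ioc K N | n ∈ B} ≤ #{n ∈ Ioc 0 K | n ∈ B} by omega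
  -- basic bounds on K
  have hceil : ⌈Real.exp ((10:ℝ)^m)⌉₊ + 1 ≤ K := by omega
  have hKexp : Real.exp ((10:ℝ)^m) ≤ (K:ℝ) := by
    calc Real.exp ((10:ℝ)^m) ≤ (⌈Real.exp ((10:ℝ)^m)⌉₊ : ℝ) := Nat.le_ceil _
      _ ≤ (K:ℝ) := by exact_mod_cast Nat.le_of_succ_le hceil
  have hpow10 : (10:ℝ) ≤ (10:ℝ)^m := by
    calc (10:ℝ) = (10:ℝ)^1 := (pow_one _).symm
      _ ≤ (10:ℝ)^m := pow_le_pow_right₀ (by norm_num) (by omega)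
  have h11K : 11 ≤ K := by
    have h1 := Real.add_one_le_exp ((10:ℝ)^m)
    have : (11:ℝ) ≤ (K:ℝ) := by linarith
    exact_mod_cast this
  -- define j
  set P : ℕ → Prop := fun i => Real.exp ((i:ℝ)^m) ≤ (K:ℝ) with hPdef
  set j := Nat.findGreatest P K with hjdef
  have hP10 : P 10 := by
    show Real.exp (((10:ℕ):ℝ)^m) ≤ (K:ℝ)
    push_cast
    exact hKexp
  have hj10 : 10 ≤ j := Nat.le_findGreatest (by omega) hP10
  have hPj : P j := Nat.findGreatest_spec (by omega : 10 ≤ K) hP10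
  have hjK : j ≤ K := Nat.findGreatest_le K
  have hKub : (K:ℝ) < Real.exp (((j:ℝ)+1)^m) := by
    by_cases hc : j + 1 ≤ K
    · have hng : ¬ P (j+1) := Nat.findGreatest_is_greatest (by omega) hc
      rw [hPdef] at hng
      rw [not_le] at hng
      push_cast at hng
      exact hng
    · have hjeq : j = K := by omega
      have h1 : (j:ℝ)+1 ≤ ((j:ℝ)+1)^m := le_self_pow₀ (by have := Nat.cast_nonneg (α := ℝ) j; linarith) (by omega)
      have h2 := Real.add_one_le_exp (((j:ℝ)+1)^m)
      have h3 : (K:ℝ) ≤ (j:ℝ) := by exact_mod_cast hjeq.ge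
      linarith
  -- abbreviations
  set D := dPrimorial j with hDdef
  set D2 := dPrimorial (j-2) with hD2def
  set E1 := Real.exp (((j:ℝ)-1)^m) with hE1def
  set E2 := Real.exp (((j:ℝ)-2)^m) with hE2def
  set Ej := Real.exp ((j:ℝ)^m) with hEjdef
  set a1 := ⌊E1⌋₊ with ha1def
  set a2 := ⌊E2⌋₊ with ha2def
  have hDpos : 0 < D := dPrimorial_pos j
  have hD2pos : 0 < D2 := dPrimorial_pos (j-2)
  have hcast1 : ((j-1:ℕ):ℝ) = (j:ℝ) - 1 := by
    rw [Nat.cast_sub (by omega)]; norm_num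
  have hcast2 : ((j-2:ℕ):ℝ) = (j:ℝ) - 2 := by
    rw [Nat.cast_sub (by omega)]; norm_num
  -- upper bound for the top piece
  have hTsub : {n ∈ Ioc K N | n ∈ B} ⊆ {n ∈ Ioc K N | D ∣ n} := by
    intro n hn
    simp only [Finset.mem_filter, Finset.mem_Ioc] at hn ⊢
    obtain ⟨⟨hn1, hn2⟩, hnB⟩ := hn
    refine ⟨⟨hn1, hn2⟩, ?_⟩
    rw [hB, mem_BU] at hnB
    obtain ⟨k, hk1, hkd, hklo, hkhi⟩ := hnB
    have hjk : j ≤ k := by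
      by_contra hcon
      push_neg at hcon
      have h1 : ((k:ℝ)+1) ≤ (j:ℝ) := by exact_mod_cast hcon
      have h2 : ((k:ℝ)+1)^m ≤ (j:ℝ)^m := pow_le_pow_left₀ (by positivity) h1 m
      have h3 : (K:ℝ) < (n:ℝ) := by exact_mod_cast hn1
      have h4 : Real.exp (((k:ℝ)+1)^m) ≤ Real.exp ((j:ℝ)^m) := Real.exp_le_exp.2 h2
      have h5 : Real.exp ((j:ℝ)^m) ≤ (K:ℝ) := hPj
      linarith
    exact dvd_trans (dPrimorial_dvd hjk) hkd
  have hTcard : (#{n ∈ Ioc K N | n ∈ B} : ℝ) ≤ ((N:ℝ) - K)/D + 1 := by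
    calc (#{n ∈ Ioc K N | n ∈ B} : ℝ) ≤ (#{n ∈ Ioc K N | D ∣ n} : ℝ) := by
          exact_mod_cast Finset.card_le_card hTsub
      _ ≤ ((N:ℝ) - K)/D + 1 := mult_card_le D K N hDpos hKN
  -- floor facts
  have hE1pos : (0:ℝ) < E1 := Real.exp_pos _
  have hE2pos : (0:ℝ) < E2 := Real.exp_pos _
  have hjR10 : (10:ℝ) ≤ (j:ℝ) := by exact_mod_cast hj10
  have hE1le : E1 ≤ Ej := by
    apply Real.exp_le_exp.2
    apply pow_le_pow_left₀ (by linarith) (by linarith)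
  have hE1K : E1 ≤ (K:ℝ) := le_trans hE1le hPj
  have ha1K : a1 ≤ K := by
    calc a1 = ⌊E1⌋₊ := rfl
      _ ≤ ⌊(K:ℝ)⌋₊ := Nat.floor_mono hE1K
      _ = K := Nat.floor_natCast K
  have hone_le_E1 : (1:ℝ) ≤ E1 := Real.one_le_exp (pow_nonneg (by linarith) m)
  have hone_le_E2 : (1:ℝ) ≤ E2 := Real.one_le_exp (pow_nonneg (by linarith) m)
  have ha11 : 1 ≤ a1 := Nat.le_floor (by exact_mod_cast hone_le_E1)
  have hE2E1 : 4 * E2 ≤ E1 := by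
    have h9 : (4:ℝ) ≤ Real.exp ((j:ℝ) - 1) := by
      have := Real.add_one_le_exp ((j:ℝ) - 1)
      linarith
    have hple : ((j:ℝ)-2)^m + ((j:ℝ)-1) ≤ ((j:ℝ)-1)^m :=
      pow_sub_bound (by linarith) hm
    calc 4 * E2 ≤ Real.exp ((j:ℝ)-1) * E2 := by nlinarith
      _ = Real.exp (((j:ℝ)-2)^m + ((j:ℝ)-1)) := by
          rw [hE2def, ← Real.exp_add]; ring_nf
      _ ≤ E1 := Real.exp_le_exp.2 hple
  have ha2E : (a2:ℝ) ≤ E2 := Nat.floor_le hE2pos.le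
  have ha21 : 1 ≤ a2 := Nat.le_floor (by exact_mod_cast hone_le_E2)
  have ha2a1 : a2 + 1 ≤ a1 := by
    apply Nat.le_floor
    push_cast
    linarith
  -- S1 ⊆ S
  have hS1sub : {n ∈ Ioc a1 K | D ∣ n} ⊆ {n ∈ Ioc 0 K | n ∈ B} := by
    intro n hn
    simp only [Finset.mem_filter, Finset.mem_Ioc] at hn ⊢
    obtain ⟨⟨hn1, hn2⟩, hdvd⟩ := hn
    refine ⟨⟨by omega, hn2⟩, ?_⟩
    rw [hB, mem_BU]
    have hnlo : E1 < (n:ℝ) := by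
      have h1 : E1 < (a1:ℝ) + 1 := Nat.lt_floor_add_one E1
      have h2 : (a1:ℝ) + 1 ≤ (n:ℝ) := by exact_mod_cast hn1
      linarith
    by_cases hc : (n:ℝ) < Ej
    · refine ⟨j-1, by omega, ?_, ?_, ?_⟩
      · exact dvd_trans (dPrimorial_dvd (by omega : j-1 ≤ j)) hdvd
      · rw [hcast1]; exact hnlo.le
      · rw [hcast1]
        have : (j:ℝ) - 1 + 1 = (j:ℝ) := by ring
        rw [this]
        exact hc
    · push_neg at hc
      refine ⟨j, by omega, hdvd, hc, ?_⟩
      have : (n:ℝ) ≤ (K:ℝ) := by exact_mod_cast hn2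
      linarith
  -- S2 ⊆ S
  have hS2sub : {n ∈ Ioc a2 (a1-1) | D2 ∣ n} ⊆ {n ∈ Ioc 0 K | n ∈ B} := by
    intro n hn
    simp only [Finset.mem_filter, Finset.mem_Ioc] at hn ⊢
    obtain ⟨⟨hn1, hn2⟩, hdvd⟩ := hn
    refine ⟨⟨by omega, by omega⟩, ?_⟩
    rw [hB, mem_BU]
    refine ⟨j-2, by omega, hdvd, ?_, ?_⟩
    · rw [hcast2]
      have h1 : E2 < (a2:ℝ) + 1 := Nat.lt_floor_add_one E2
      have h2 : (a2:ℝ) + 1 ≤ (n:ℝ) := by exact_mod_cast hn1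
      rw [← hE2def]
      linarith
    · rw [hcast2]
      have heq : (j:ℝ) - 2 + 1 = (j:ℝ) - 1 := by ring
      rw [heq, ← hE1def]
      have h1 : (n:ℝ) ≤ ((a1 - 1 : ℕ):ℝ) := by exact_mod_cast hn2
      have h2 : ((a1 - 1 : ℕ):ℝ) = (a1:ℝ) - 1 := by
        rw [Nat.cast_sub ha11]; norm_num
      have h3 : (a1:ℝ) ≤ E1 := Nat.floor_le hE1pos.le
      linarith
  -- disjointness and card lower bound for S
  have hdisj : Disjoint {n ∈ Ioc a1 K | D ∣ n} {n ∈ Ioc a2 (a1-1) | D2 ∣ n} := by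
    rw [Finset.disjoint_left]
    intro x hx hx'
    simp only [Finset.mem_filter, Finset.mem_Ioc] at hx hx'
    omega
  have hScard : #{n ∈ Ioc a1 K | D ∣ n} + #{n ∈ Ioc a2 (a1-1) | D2 ∣ n}
      ≤ #{n ∈ Ioc 0 K | n ∈ B} := by
    rw [← Finset.card_union_of_disjoint hdisj]
    apply Finset.card_le_card
    exact Finset.union_subset hS1sub hS2sub
  have hS1card : ((K:ℝ) - a1)/D - 1 ≤ (#{n ∈ Ioc a1 K | D ∣ n} : ℝ) :=
    mult_card_ge D a1 K hDpos ha1K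
  have hS2card : ((a1:ℝ) - 1 - a2)/D2 - 1 ≤ (#{n ∈ Ioc a2 (a1-1) | D2 ∣ n} : ℝ) := by
    have h := mult_card_ge D2 a2 (a1-1) hD2pos (by omega)
    have h2 : ((a1 - 1 : ℕ):ℝ) = (a1:ℝ) - 1 := by
      rw [Nat.cast_sub ha11]; norm_num
    rw [h2] at h
    exact h
  -- real facts for final arithmetic
  have hDpos' : (0:ℝ) < D := by exact_mod_cast hDpos
  have hD2pos' : (0:ℝ) < D2 := by exact_mod_cast hD2pos
  have hD2D : 4*(D2:ℝ) ≤ (D:ℝ) := by exact_mod_cast four_dPrimorial_le (by omega : 2 ≤ j)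
  have hDle : (D:ℝ) ≤ Real.exp (0.7 * (j:ℝ)^2) := by
    have h1 : (D:ℝ) ≤ ((2^(j*j) : ℕ):ℝ) := by exact_mod_cast dPrimorial_le j
    have h2 : ((2^(j*j) : ℕ):ℝ) = (2:ℝ)^(j*j) := by push_cast; ring
    have h3 : (2:ℝ)^(j*j) ≤ (Real.exp 0.7)^(j*j) :=
      pow_le_pow_left₀ (by norm_num) two_le_exp_pt7 _
    have h4 : (Real.exp 0.7)^(j*j) = Real.exp (((j*j : ℕ):ℝ) * 0.7) := by
      rw [Real.exp_nat_mul]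
    have h5 : ((j*j : ℕ):ℝ) * 0.7 = 0.7 * (j:ℝ)^2 := by push_cast; ring
    rw [h5] at h4
    linarith
  have hE1D : 12 * Real.exp (0.7 * (j:ℝ)^2) ≤ E1 := by
    have hq := quad_bound hjR10
    have hpow : ((j:ℝ)-1)^2 ≤ ((j:ℝ)-1)^m := pow_le_pow_right₀ (by linarith) hm
    calc 12 * Real.exp (0.7 * (j:ℝ)^2)
        ≤ Real.exp 3 * Real.exp (0.7 * (j:ℝ)^2) := by
          exact mul_le_mul_of_nonneg_right twelve_le_exp_three
            (Real.exp_pos (0.7 * (j:ℝ)^2)).le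
      _ = Real.exp (3 + 0.7 * (j:ℝ)^2) := (Real.exp_add _ _).symm
      _ ≤ Real.exp (((j:ℝ)-1)^2) := Real.exp_le_exp.2 (by linarith)
      _ ≤ E1 := Real.exp_le_exp.2 hpow
  have hexp07 : (1:ℝ) ≤ Real.exp (0.7 * (j:ℝ)^2) := Real.one_le_exp (by positivity)
  have ha1E : E1 - 1 < (a1:ℝ) := Nat.sub_one_lt_floor E1
  have hE112 : (12:ℝ) ≤ E1 := by nlinarith
  -- the key division inequality
  have hnum : (a1:ℝ) + 1 + 12*(D2:ℝ) ≤ 4*((a1:ℝ) - 1 - (a2:ℝ)) := by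
    have h12D2 : 12*(D2:ℝ) ≤ 3*(D:ℝ) := by linarith
    have h3D : 3*(D:ℝ) ≤ 3 * Real.exp (0.7 * (j:ℝ)^2) := by linarith
    have h3e : 3 * Real.exp (0.7 * (j:ℝ)^2) ≤ E1/4 := by linarith
    have h4a2 : 4*(a2:ℝ) ≤ E1 := by linarith
    linarith
  have hkey : ((a1:ℝ)+1)/(D:ℝ) + 3 ≤ ((a1:ℝ) - 1 - (a2:ℝ))/(D2:ℝ) := by
    have t1 : ((a1:ℝ)+1)/(D:ℝ) ≤ ((a1:ℝ)+1)/(4*(D2:ℝ)) := by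
      rw [div_le_div_iff₀ hDpos' (by positivity)]
      have ha1nn : (0:ℝ) ≤ (a1:ℝ)+1 := by positivity
      nlinarith
    have t2 : ((a1:ℝ)+1)/(4*(D2:ℝ)) + 3 ≤ ((a1:ℝ) - 1 - (a2:ℝ))/(D2:ℝ) := by
      have heq : ((a1:ℝ)+1)/(4*(D2:ℝ)) + 3 = ((a1:ℝ)+1 + 12*(D2:ℝ))/(4*(D2:ℝ)) := by
        field_simp; ring
      rw [heq, div_le_div_iff₀ (by positivity) hD2pos']
      nlinarith
    linarith
  -- finish
  have hNK2 : (N:ℝ) ≤ 2*(K:ℝ) + 1 := by exact_mod_cast by omega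
  have hT2 : (#{n ∈ Ioc K N | n ∈ B} : ℝ) ≤ ((K:ℝ) + 1)/D + 1 := by
    have : ((N:ℝ) - K)/D ≤ ((K:ℝ)+1)/D := by
      apply div_le_div_of_nonneg_right ?_ hDpos'.le
      linarith
    linarith
  have hsplitdiv : ((K:ℝ)+1)/(D:ℝ) = ((K:ℝ)-(a1:ℝ))/(D:ℝ) + ((a1:ℝ)+1)/(D:ℝ) := by
    rw [← add_div]; ring_nf
  have hfinal : (#{n ∈ Ioc K N | n ∈ B} : ℝ) ≤
      (#{n ∈ Ioc a1 K | D ∣ n} : ℝ) + (#{n ∈ Ioc a2 (a1-1) | D2 ∣ n} : ℝ) := by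
    linarith
  have hfinal' : #{n ∈ Ioc K N | n ∈ B} ≤
      #{n ∈ Ioc a1 K | D ∣ n} + #{n ∈ Ioc a2 (a1-1) | D2 ∣ n} := by
    exact_mod_cast hfinal
  omega
lemma cnt_floor (B : Set ℕ) (x : ℝ) (hx : 0 ≤ x) :
    cnt B x = {n : ℕ | n ∈ B ∧ 1 ≤ n ∧ n ≤ ⌊x⌋₊}.ncard := by
  unfold cnt
  congr 1
  ext n
  simp only [Set.mem_setOf_eq]
  exact and_congr_right fun _ => and_congr_right fun _ => (Nat.le_floor_iff hx).symm

theorem stmt_9 (m : ℕ) (hm : 2 ≤ m) :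
    (∀ᶠ x : ℝ in atTop,
      (cnt (⋃ j ∈ {j : ℕ | 1 ≤ j}, Bset m j) x : ℝ) / 2 ≤
        (cnt (⋃ j ∈ {j : ℕ | 1 ≤ j}, Bset m j) (x / 2) : ℝ)) ∧
    ∃ κ : ℝ, 0 < κ ∧ ∀ᶠ x : ℝ in atTop,
      κ * (cnt (⋃ j ∈ {j : ℕ | 1 ≤ j}, Bset m j) x : ℝ) ≤
        (cnt (⋃ j ∈ {j : ℕ | 1 ≤ j}, Bset m j) ((1 / 2) * x) : ℝ) := by
  obtain ⟨N0, hN0⟩ := key m hm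
  have main : ∀ x : ℝ, (N0:ℝ) + 1 ≤ x →
      (cnt (⋃ j ∈ {j : ℕ | 1 ≤ j}, Bset m j) x : ℝ) / 2 ≤
        (cnt (⋃ j ∈ {j : ℕ | 1 ≤ j}, Bset m j) (x / 2) : ℝ) := by
    intro x hx
    have hx0 : (0:ℝ) ≤ x := by
      have := Nat.cast_nonneg (α := ℝ) N0
      linarith
    have hx0' : (0:ℝ) ≤ x / 2 := by linarith
    have hfl : N0 ≤ ⌊x⌋₊ := Nat.le_floor (by linarith)
    have hkey := hN0 ⌊x⌋₊ hfl
    have hfloor2 : ⌊x/2⌋₊ = ⌊x⌋₊ / 2 := by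
      have h2 : x/2 = x / ((2:ℕ):ℝ) := by norm_num
      rw [h2, Nat.floor_div_natCast]
    rw [cnt_floor _ x hx0, cnt_floor _ (x/2) hx0', hfloor2]
    have hcast : ({n : ℕ | n ∈ (⋃ j ∈ {j : ℕ | 1 ≤ j}, Bset m j) ∧ 1 ≤ n ∧ n ≤ ⌊x⌋₊}.ncard : ℝ)
        ≤ 2 * ({n : ℕ | n ∈ (⋃ j ∈ {j : ℕ | 1 ≤ j}, Bset m j) ∧ 1 ≤ n ∧ n ≤ ⌊x⌋₊ / 2}.ncard : ℝ) := by
      exact_mod_cast hkey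
    linarith
  constructor
  · filter_upwards [eventually_ge_atTop ((N0:ℝ)+1)] with x hx using main x hx
  · refine ⟨1/2, by norm_num, ?_⟩
    filter_upwards [eventually_ge_atTop ((N0:ℝ)+1)] with x hx
    show (1/2 : ℝ) * (cnt (⋃ j ∈ {j : ℕ | 1 ≤ j}, Bset m j) x : ℝ) ≤
      (cnt (⋃ j ∈ {j : ℕ | 1 ≤ j}, Bset m j) ((1/2) * x) : ℝ)
    have heq : (1/2:ℝ) * x = x / 2 := by ring
    rw [heq]
    have h := main x hx
    linarith
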